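/- arXiv:2108.09168 — 2 statements merged into one kernel-verified Lean document; each statement's English description precedes it below -/
import Mathlib

section
/- Let L be an algebraic lattice whose join-semilattice of compact elements is dually pseudo-complemented, with greatest element 1. The following are equivalent: (i) a = (a + c*) ⊓ (a + c**) for all compact a, c; (ii) a = (a + c*) ⊓ (a + c**) for all a ∈ L and compact c; (iii) whenever a ∈ L \ {1} is meet-irreducible, the interval [a,1) has a greatest element; (iv) whenever a ∈ L is completely meet-irreducible, 1 is join-irreducible in [a,1]. -/
/-!
Write `c*` for `star c`. Everything turns on the following equivalence, valid for every `p`: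
`⊤` is join-irreducible above `p` iff `c* ≤ p` or `c** ≤ p` for every compact `c`.
Since `⊤ = ⊥*` is compact, a decomposition `⊤ = x ⊔ y` can be shrunk to `⊤ = x ⊔ v` with `v ≤ y`
compact, and then `v* ≤ x`; this gives one direction, and `(p ⊔ c) ⊔ (p ⊔ c*) = ⊤` the other.
Condition (ii) at a meet-irreducible `a` yields the dichotomy, hence (iii) by compactness of `⊤`;
conversely the dichotomy at all completely meet-irreducible `p ≥ a` yields (ii), because `a` is
the meet of these `p`. Finally (i) ⇒ (ii) by approximating `a` with compact elements.
-/

open CompleteLattice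

section

variable {L : Type*} [CompleteLattice L]

def CompletelyInfIrred (a : L) : Prop :=
  ∀ X : Set L, a = sInf X → a ∈ X

def TopSupIrredAbove (a : L) : Prop :=
  ∀ x y : L, a ≤ x → a ≤ y → x ⊔ y = ⊤ → x = ⊤ ∨ y = ⊤

theorem CompletelyInfIrred.ne_top {a : L} (ha : CompletelyInfIrred a) : a ≠ ⊤ := fun h =>
  ha ∅ (by rw [sInf_empty, h])

theorem CompletelyInfIrred.eq_or_eq_of_eq_inf {a : L} (ha : CompletelyInfIrred a) {x y : L}
    (h : a = x ⊓ y) : a = x ∨ a = y :=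
  ha {x, y} (by rw [sInf_pair, h])

theorem topSupIrredAbove_of_greatest_lt_top {a m : L} (hm : m < ⊤)
    (hgreatest : ∀ d : L, a ≤ d → d < ⊤ → d ≤ m) : TopSupIrredAbove a := by
  intro x y hax hay hxy
  by_contra! hne
  have hxm := hgreatest x hax hne.1.lt_top
  have hym := hgreatest y hay hne.2.lt_top
  exact hm.ne (top_unique (hxy ▸ sup_le hxm hym))

theorem TopSupIrredAbove.exists_greatest_lt_top (htop : IsCompactElement (⊤ : L)) {a : L}
    (ha : a ≠ ⊤) (hirr : TopSupIrredAbove a) :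
    ∃ m : L, a ≤ m ∧ m < ⊤ ∧ ∀ d : L, a ≤ d → d < ⊤ → d ≤ m := by
  set D : Set L := {d | a ≤ d ∧ d < ⊤}
  have haD : a ∈ D := ⟨le_rfl, ha.lt_top⟩
  have hdir : DirectedOn (· ≤ ·) D := by
    rintro x ⟨hax, hx⟩ y ⟨hay, hy⟩
    refine ⟨x ⊔ y, ⟨hax.trans le_sup_left, lt_top_iff_ne_top.2 fun hxy => ?_⟩,
      le_sup_left, le_sup_right⟩
    rcases hirr x y hax hay hxy with h | h
    exacts [hx.ne h, hy.ne h]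
  exact ⟨sSup D, le_sSup haD, htop.directed_sSup_lt_of_lt ⟨a, haD⟩ hdir fun d hd => hd.2,
    fun d had hd => le_sSup ⟨had, hd⟩⟩

theorem isCompactElement_bot : IsCompactElement (⊥ : L) := by
  simpa using isCompactElement_finsetSup (f := id) (∅ : Finset L) (by simp)

theorem IsCompactElement.sup {a b : L} (ha : IsCompactElement a) (hb : IsCompactElement b) :
    IsCompactElement (a ⊔ b) := by
  classical
  simpa using isCompactElement_finsetSup (f := id) {a, b} (by simp [ha, hb])

theorem IsCompactElement.exists_completelyInfIrred {x a : L} (hx : IsCompactElement x)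
    (hxa : ¬x ≤ a) : ∃ p, CompletelyInfIrred p ∧ a ≤ p ∧ ¬x ≤ p := by
  have hchain : ∀ ch ⊆ {p : L | a ≤ p ∧ ¬x ≤ p}, IsChain (· ≤ ·) ch → ∀ y ∈ ch,
      ∃ ub ∈ {p : L | a ≤ p ∧ ¬x ≤ p}, ∀ z ∈ ch, z ≤ ub := by
    intro ch hch hchain y hy
    refine ⟨sSup ch, ⟨(hch hy).1.trans (le_sSup hy), fun hxs => ?_⟩, fun z hz => le_sSup hz⟩
    obtain ⟨z, hz, hxz⟩ := (isCompactElement_iff_le_of_directed_sSup_le L x).1 hx ch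
      ⟨y, hy⟩ hchain.directedOn hxs
    exact (hch hz).2 hxz
  obtain ⟨p, hap, hmax⟩ := zorn_le_nonempty₀ _ hchain a ⟨le_rfl, hxa⟩
  refine ⟨p, fun X hX => ?_, hap, hmax.prop.2⟩
  by_contra hpX
  have hxX : ∀ z ∈ X, x ≤ z := fun z hz => by
    have hpz : p < z := (hX ▸ sInf_le hz).lt_of_ne fun h => hpX (h ▸ hz)
    by_contra hxz
    exact hmax.not_prop_of_gt hpz ⟨hap.trans hpz.le, hxz⟩
  exact hmax.prop.2 (hX ▸ le_sInf hxX)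

section CompactlyGenerated

variable [IsCompactlyGenerated L]

theorem le_of_forall_completelyInfIrred {a b : L}
    (h : ∀ p, CompletelyInfIrred p → a ≤ p → b ≤ p) : b ≤ a := by
  refine le_iff_compact_le_imp.2 fun x hx hxb => ?_
  by_contra hxa
  obtain ⟨p, hp, hap, hxp⟩ := hx.exists_completelyInfIrred hxa
  exact hxp (hxb.trans (h p hp hap))

theorem IsCompactElement.exists_le_sup_of_le_sup {x a k : L} (hx : IsCompactElement x)
    (h : x ≤ a ⊔ k) : ∃ u, IsCompactElement u ∧ u ≤ a ∧ x ≤ u ⊔ k := by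
  classical
  set S : Set L := {u | IsCompactElement u ∧ u ≤ a}
  have hxS : x ≤ sSup (insert k S) := by rwa [sSup_insert, sSup_compact_le_eq, sup_comm]
  obtain ⟨t, htS, hxt⟩ := (isCompactElement_iff_exists_le_sSup_of_le_sSup L x).1 hx _ hxS
  refine ⟨(t.filter (· ∈ S)).sup id,
    isCompactElement_finsetSup _ fun u hu => (Finset.mem_filter.1 hu).2.1,
    Finset.sup_le fun u hu => (Finset.mem_filter.1 hu).2.2,
    hxt.trans (Finset.sup_le fun y hy => ?_)⟩
  rcases htS hy with rfl | hyS
  · exact le_sup_right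
  · exact le_sup_of_le_left (Finset.le_sup (f := id) (Finset.mem_filter.2 ⟨hy, hyS⟩))

theorem sup_inf_sup_eq_of_forall_isCompactElement {s t : L}
    (h : ∀ u : L, IsCompactElement u → (u ⊔ s) ⊓ (u ⊔ t) = u) (a : L) :
    (a ⊔ s) ⊓ (a ⊔ t) = a := by
  refine le_antisymm (le_iff_compact_le_imp.2 fun x hx hxa => ?_) (le_inf le_sup_left le_sup_left)
  obtain ⟨u₁, hu₁, hu₁a, hxu₁⟩ := hx.exists_le_sup_of_le_sup (hxa.trans inf_le_left)
  obtain ⟨u₂, hu₂, hu₂a, hxu₂⟩ := hx.exists_le_sup_of_le_sup (hxa.trans inf_le_right)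
  calc x ≤ ((u₁ ⊔ u₂) ⊔ s) ⊓ ((u₁ ⊔ u₂) ⊔ t) :=
        le_inf (hxu₁.trans (sup_le_sup_right le_sup_left _))
          (hxu₂.trans (sup_le_sup_right le_sup_right _))
    _ = u₁ ⊔ u₂ := h _ (hu₁.sup hu₂)
    _ ≤ a := sup_le hu₁a hu₂a

theorem sup_inf_sup_eq_of_forall_completelyInfIrred {a s t : L}
    (h : ∀ p, CompletelyInfIrred p → a ≤ p → s ≤ p ∨ t ≤ p) : (a ⊔ s) ⊓ (a ⊔ t) = a := by
  refine le_antisymm (le_of_forall_completelyInfIrred fun p hp hap => ?_)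
    (le_inf le_sup_left le_sup_left)
  rcases h p hp hap with hs | ht
  · exact inf_le_left.trans (sup_le hap hs)
  · exact inf_le_right.trans (sup_le hap ht)

end CompactlyGenerated

structure IsCompactDualPseudocompl (star : L → L) : Prop where
  isCompactElement_star {c : L} : IsCompactElement c → IsCompactElement (star c)
  sup_star_eq_top {c : L} : IsCompactElement c → c ⊔ star c = ⊤
  star_le {c b : L} : IsCompactElement c → IsCompactElement b → c ⊔ b = ⊤ → star c ≤ b

namespace IsCompactDualPseudocompl

variable {star : L → L}

theorem isCompactElement_top (hs : IsCompactDualPseudocompl star) :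
    IsCompactElement (⊤ : L) := by
  have h := hs.sup_star_eq_top (isCompactElement_bot (L := L))
  rw [bot_sup_eq] at h
  exact h ▸ hs.isCompactElement_star isCompactElement_bot

variable [IsCompactlyGenerated L]

theorem star_le_of_sup_eq_top (hs : IsCompactDualPseudocompl star) {c p : L}
    (hc : IsCompactElement c) (h : p ⊔ c = ⊤) : star c ≤ p := by
  obtain ⟨u, hu, hup, htop⟩ := hs.isCompactElement_top.exists_le_sup_of_le_sup h.ge
  exact (hs.star_le hc hu (top_unique (htop.trans_eq (sup_comm u c)))).trans hup

theorem topSupIrredAbove_iff (hs : IsCompactDualPseudocompl star) {p : L} :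
    TopSupIrredAbove p ↔ ∀ c : L, IsCompactElement c → star c ≤ p ∨ star (star c) ≤ p := by
  constructor
  · intro hirr c hc
    have hsup : (p ⊔ c) ⊔ (p ⊔ star c) = ⊤ := by
      rw [sup_sup_sup_comm, sup_idem, hs.sup_star_eq_top hc, sup_top_eq]
    rcases hirr _ _ le_sup_left le_sup_left hsup with h | h
    · exact Or.inl (hs.star_le_of_sup_eq_top hc h)
    · exact Or.inr (hs.star_le_of_sup_eq_top (hs.isCompactElement_star hc) h)
  · intro hdich x y hpx hpy hxy
    obtain ⟨v, hv, hvy, htop⟩ :=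
      hs.isCompactElement_top.exists_le_sup_of_le_sup (hxy.ge.trans_eq (sup_comm x y))
    have hvx : star v ≤ x := hs.star_le_of_sup_eq_top hv (top_unique (htop.trans_eq (sup_comm v x)))
    rcases hdich v hv with h | h
    · exact Or.inr (top_unique ((hs.sup_star_eq_top hv).ge.trans (sup_le hvy (h.trans hpy))))
    · exact Or.inl (top_unique ((hs.sup_star_eq_top (hs.isCompactElement_star hv)).ge.trans
        (sup_le hvx (h.trans hpx))))

end IsCompactDualPseudocompl

end

/-- Equivalence of the four conditions characterizing the WEML on algebraic lattices. -/
theorem stmt_8 (L : Type*) [CompleteLattice L] [IsCompactlyGenerated L]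
    (star : L → L)
    (hstar_cpt : ∀ c : L, IsCompactElement c → IsCompactElement (star c))
    (hjoin : ∀ c : L, IsCompactElement c → c ⊔ star c = ⊤)
    (hleast : ∀ c b : L, IsCompactElement c → IsCompactElement b → c ⊔ b = ⊤ → star c ≤ b) :
    List.TFAE
      [∀ a c : L, IsCompactElement a → IsCompactElement c →
          (a ⊔ star c) ⊓ (a ⊔ star (star c)) = a,
       ∀ a c : L, IsCompactElement c → (a ⊔ star c) ⊓ (a ⊔ star (star c)) = a,
       ∀ a : L, a ≠ ⊤ → (∀ x y : L, a = x ⊓ y → a = x ∨ a = y) →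
          ∃ m : L, a ≤ m ∧ m < ⊤ ∧ ∀ d : L, a ≤ d → d < ⊤ → d ≤ m,
       ∀ a : L, (∀ X : Set L, a = sInf X → a ∈ X) →
          ∀ x y : L, a ≤ x → a ≤ y → x ⊔ y = ⊤ → x = ⊤ ∨ y = ⊤] := by
  have hs : IsCompactDualPseudocompl star := ⟨hstar_cpt _, hjoin _, hleast _ _⟩
  tfae_have 1 → 2
  | h1, a, c, hc => sup_inf_sup_eq_of_forall_isCompactElement (fun u hu => h1 u c hu hc) a
  tfae_have 2 → 1
  | h2, a, c, _, hc => h2 a c hc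
  tfae_have 2 → 3
  | h2, a, ha, hirr => by
    refine TopSupIrredAbove.exists_greatest_lt_top hs.isCompactElement_top ha
      (hs.topSupIrredAbove_iff.2 fun c hc => ?_)
    rcases hirr _ _ (h2 a c hc).symm with h | h
    exacts [Or.inl (sup_eq_left.1 h.symm), Or.inr (sup_eq_left.1 h.symm)]
  tfae_have 3 → 4
  | h3, a, (ha : CompletelyInfIrred a) => by
    obtain ⟨m, -, hm, hgreatest⟩ := h3 a ha.ne_top fun x y => ha.eq_or_eq_of_eq_inf
    exact topSupIrredAbove_of_greatest_lt_top hm hgreatest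
  tfae_have 4 → 2
  | h4, a, c, hc => sup_inf_sup_eq_of_forall_completelyInfIrred fun p hp _ =>
    hs.topSupIrredAbove_iff.1 (h4 p hp) c hc
  tfae_finish
end

section
/- Let A be a nontrivial De Morgan monoid with least element ⊥ which is rigorously compact and in which {⊥} is an equivalence class of every proper congruence. If a ∧ b = ⊥ with a, b ≤ e, then a = ⊥ or b = ⊥; i.e., ⊥ is meet-irreducible in the sublattice (e] = {x : x ≤ e}. -/
/-!
Assume `a ≠ ⊥`. Since `a ≤ e` and `a ≤ a·a`, the relation `x θ y :⟺ a·x ≤ y ∧ a·y ≤ x` is a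
congruence of `A`; it is proper, because rigorous compactness gives `a·⊤ = ⊤ ≰ ⊥`. As
`a·b ≤ a ∧ b = ⊥` we get `⊥ θ b`, so `b = ⊥` because `{⊥}` is a `θ`-class.
-/

/-- A De Morgan monoid: a distributive lattice and a square-increasing commutative
monoid with an involution ¬ satisfying x·y ≤ z ⟺ x·¬z ≤ ¬y. -/
class DeMorganMonoid (A : Type*) extends DistribLattice A, CommMonoid A where
  neg : A → A
  square_increasing : ∀ x : A, x ≤ x * x
  neg_neg : ∀ x : A, neg (neg x) = x
  contra : ∀ x y z : A, x * y ≤ z ↔ x * neg z ≤ neg y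

open DeMorganMonoid

/-- A congruence of a De Morgan monoid. -/
structure IsDMMCongruence {A : Type*} [DeMorganMonoid A] (r : A → A → Prop) : Prop where
  refl : ∀ x, r x x
  symm : ∀ {x y}, r x y → r y x
  trans : ∀ {x y z}, r x y → r y z → r x z
  mul_compat : ∀ {x y u v}, r x y → r u v → r (x * u) (y * v)
  inf_compat : ∀ {x y u v}, r x y → r u v → r (x ⊓ u) (y ⊓ v)
  sup_compat : ∀ {x y u v}, r x y → r u v → r (x ⊔ u) (y ⊔ v)
  neg_compat : ∀ {x y}, r x y → r (neg x) (neg y)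

namespace DeMorganMonoid

variable {A : Type*} [DeMorganMonoid A]

theorem neg_le_neg {x y : A} (h : x ≤ y) : neg y ≤ neg x := by
  simpa using (contra 1 x y).mp (by simpa using h)

theorem le_neg_comm {x y : A} : x ≤ neg y ↔ y ≤ neg x :=
  ⟨fun h => (DeMorganMonoid.neg_neg y).symm.le.trans (neg_le_neg h),
   fun h => (DeMorganMonoid.neg_neg x).symm.le.trans (neg_le_neg h)⟩

instance : IsOrderedMonoid A where
  mul_le_mul_left y z h x := by
    rw [mul_comm y, mul_comm z, contra]
    exact ((contra x z _).mp le_rfl).trans (neg_le_neg h)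

theorem mul_le_iff_le_neg {x y z : A} : x * y ≤ z ↔ y ≤ neg (x * neg z) := by
  rw [contra, le_neg_comm]

theorem neg_bot [OrderBot A] [OrderTop A] : neg (⊥ : A) = ⊤ :=
  top_le_iff.mp (le_neg_comm.mp bot_le)

theorem mul_bot [OrderBot A] [OrderTop A] (x : A) : x * ⊥ = ⊥ :=
  le_bot_iff.mp ((contra x ⊥ ⊥).mpr (neg_bot (A := A) ▸ le_top))

theorem mul_le_inf_of_le_one {a b : A} (ha : a ≤ 1) (hb : b ≤ 1) : a * b ≤ a ⊓ b :=
  le_inf (mul_le_of_le_one_right' hb) (mul_le_of_le_one_left' ha)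

/-- For `a ≤ e` this is the congruence `Ω([a))` of the `R^t`-filter generated by `a`:
`a·x ≤ y` says `a ≤ x → y`. -/
def absorbRel (a x y : A) : Prop :=
  a * x ≤ y ∧ a * y ≤ x

theorem isDMMCongruence_absorbRel {a : A} (ha : a ≤ 1) : IsDMMCongruence (absorbRel a) where
  refl x := ⟨mul_le_of_le_one_left' ha, mul_le_of_le_one_left' ha⟩
  symm h := h.symm
  trans {x y z} hxy hyz := by
    have twice {u v w : A} (huv : a * u ≤ v) (hvw : a * v ≤ w) : a * u ≤ w :=
      calc a * u ≤ a * a * u := mul_le_mul_left (square_increasing a) u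
        _ = a * (a * u) := mul_assoc a a u
        _ ≤ a * v := mul_le_mul_right huv a
        _ ≤ w := hvw
    exact ⟨twice hxy.1 hyz.1, twice hyz.2 hxy.2⟩
  mul_compat {x y u v} hxy huv := by
    have split {x y u v : A} (hxy : a * x ≤ y) (huv : a * u ≤ v) : a * (x * u) ≤ y * v :=
      calc a * (x * u) ≤ a * a * (x * u) := mul_le_mul_left (square_increasing a) _
        _ = a * x * (a * u) := mul_mul_mul_comm a a x u
        _ ≤ y * v := mul_le_mul' hxy huv
    exact ⟨split hxy.1 huv.1, split hxy.2 huv.2⟩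
  inf_compat {x y u v} hxy huv := by
    have inf {x y u v : A} (hxy : a * x ≤ y) (huv : a * u ≤ v) : a * (x ⊓ u) ≤ y ⊓ v :=
      le_inf ((mul_le_mul_right inf_le_left a).trans hxy)
        ((mul_le_mul_right inf_le_right a).trans huv)
    exact ⟨inf hxy.1 huv.1, inf hxy.2 huv.2⟩
  sup_compat {x y u v} hxy huv := by
    -- `a · _` preserves joins, being residuated
    have sup {x y u v : A} (hxy : a * x ≤ y) (huv : a * u ≤ v) : a * (x ⊔ u) ≤ y ⊔ v :=
      mul_le_iff_le_neg.mpr (sup_le (mul_le_iff_le_neg.mp (hxy.trans le_sup_left))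
        (mul_le_iff_le_neg.mp (huv.trans le_sup_right)))
    exact ⟨sup hxy.1 huv.1, sup hxy.2 huv.2⟩
  neg_compat {x y} hxy := ⟨(contra a y x).mp hxy.2, (contra a x y).mp hxy.1⟩

theorem not_absorbRel_top_bot [OrderBot A] [OrderTop A] {a : A} (ha : a ≠ ⊥)
    (hrc : a * ⊤ = ⊤) : ¬ absorbRel a ⊤ ⊥ := fun h =>
  ha (le_bot_iff.mp (le_top.trans (hrc ▸ h.1)))

end DeMorganMonoid

theorem stmt_16_general (A : Type*) [DeMorganMonoid A] [OrderBot A] [OrderTop A]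
    (hrc : ∀ a : A, a ≠ ⊥ → a * ⊤ = ⊤)
    (hclass : ∀ θ : A → A → Prop, IsDMMCongruence θ → (∃ x y : A, ¬ θ x y) →
      ∀ a : A, θ ⊥ a → a = ⊥)
    (a b : A) (hab : a ⊓ b = ⊥) (hae : a ≤ 1) (hbe : b ≤ 1) :
    a = ⊥ ∨ b = ⊥ := by
  by_cases ha : a = ⊥
  · exact Or.inl ha
  have hbot_b : absorbRel a ⊥ b :=
    ⟨by rw [mul_bot]; exact bot_le, hab ▸ mul_le_inf_of_le_one hae hbe⟩
  exact Or.inr (hclass _ (isDMMCongruence_absorbRel hae)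
    ⟨⊤, ⊥, not_absorbRel_top_bot ha (hrc a ha)⟩ b hbot_b)

/-- In a nontrivial rigorously compact De Morgan monoid in which {⊥} is a class of
every proper congruence, ⊥ is meet-irreducible in the sublattice (e]. -/
theorem stmt_16 (A : Type*) [DeMorganMonoid A] [OrderBot A] [OrderTop A] [Nontrivial A]
    (hrc : ∀ a : A, a ≠ ⊥ → a * ⊤ = ⊤)
    (hclass : ∀ θ : A → A → Prop, IsDMMCongruence θ → (∃ x y : A, ¬ θ x y) →
      ∀ a : A, θ ⊥ a → a = ⊥)
    (a b : A) (hab : a ⊓ b = ⊥) (hae : a ≤ 1) (hbe : b ≤ 1) :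
    a = ⊥ ∨ b = ⊥ :=
  stmt_16_general A hrc hclass a b hab hae hbe
end
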